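/- Let E be the Banach algebra of continuous ℂ-linear endomorphisms of a nontrivial finite-dimensional complex normed space (with composition as multiplication, identity 1, and exponential exp). Let Γ_1, …, Γ_k ∈ E be pairwise commuting and suppose that for all 1 ≤ a ≤ b ≤ k the consecutive sum S_{a,b} := Σ_{i=a}^{b} Γ_i is invertible in E. Then for every t ∈ ℝ the iterated Bochner integral ∫_0^t dt_1 ∫_0^{t_1} dt_2 ⋯ ∫_0^{t_{k−1}} dt_k exp(−Σ_{j=1}^{k} t_j Γ_j) equals ∏_{n=1}^{k} S_{1,n}^{−1} + Σ_{p=1}^{k} (−1)^p exp(−t S_{1,p}) · (∏_{m=1}^{p} S_{m,p}^{−1}) · (∏_{n=p+1}^{k} S_{p+1,n}^{−1}), where all factors commute, products are taken in the indicated order, and empty products equal 1. -/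

import Mathlib

/-!
Write `x_p = S_{1,p}` (so `x_0 = 0` and `Γ_j = x_j - x_{j-1}`). The right-hand side is
`Σ_{p=0}^{k} exp(-t x_p) ∏_{j ≠ p} (x_j - x_p)⁻¹`, i.e. up to sign a divided difference of
`u ↦ exp(-t u)` at the nodes `x_0, …, x_k`. Peeling off the outermost integral, the claim for
`k + 1` nodes follows from the claim for the nodes `x_1, …, x_{k+1}` by the fundamental theorem of
calculus: the `t`-derivative of the closed form for `x_0, …, x_{k+1}` is `exp(-t Γ_1)` times the
closed form for `x_1, …, x_{k+1}`, and at `t = 0` the closed form is `Σ_p ∏_{j ≠ p} (x_j - x_p)⁻¹`,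
which vanishes for two or more nodes.

All of this is commutative algebra, carried out in the bicommutant of `{Γ_1, …, Γ_k}`: a closed
commutative subalgebra that contains the inverses of its elements that are invertible in `E`.
-/

open MeasureTheory

/-- Iterated time-ordered Bochner integral
`∫_0^t dt_1 ∫_0^{t_1} dt_2 ⋯ ∫_0^{t_{k-1}} dt_k exp(-(A + Σ_j t_j Γ_j))`
of the operator-valued integrand, with accumulated exponent `A`
(so that `iterE [Γ_1,…,Γ_k] 0 t` is the iterated integral of `exp(-Σ_j t_j Γ_j)`). -/
noncomputable def iterE {V : Type*} [NormedAddCommGroup V] [NormedSpace ℂ V] :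
    List (V →L[ℂ] V) → (V →L[ℂ] V) → ℝ → (V →L[ℂ] V)
  | [], A, _ => NormedSpace.exp (-A)
  | Γ :: Γs, A, t => ∫ s in (0:ℝ)..t, iterE Γs (A + s • Γ) s

open Finset NormedSpace

theorem Ring.inverse_neg {R : Type*} [Ring R] (a : R) : Ring.inverse (-a) = -Ring.inverse a := by
  by_cases ha : IsUnit a
  · obtain ⟨u, rfl⟩ := ha
    rw [← Units.val_neg, Ring.inverse_unit, Ring.inverse_unit]
    simp
  · rw [Ring.inverse_non_unit a ha, Ring.inverse_non_unit _ (by rwa [IsUnit.neg_iff]), neg_zero]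

theorem map_ringInverse {R S F : Type*} [Ring R] [Ring S] [FunLike F R S] [RingHomClass F R S]
    (f : F) {a : R} (ha : IsUnit a) : f (Ring.inverse a) = Ring.inverse (f a) :=
  ((Ring.inverse_mul_eq_iff_eq_mul (f a) 1 _ (ha.map f)).2
    (by rw [← map_mul, Ring.mul_inverse_cancel a ha, map_one])).symm.trans (mul_one _)

theorem prod_range_eq_list_prod {M : Type*} [CommMonoid M] (f : ℕ → M) (n : ℕ) :
    ∏ i ∈ range n, f i = ((List.range n).map f).prod := by
  simp [Finset.prod_eq_multiset_prod, Finset.range_val, Multiset.range]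

theorem sum_Icc_one_sub_sum_Icc_one {M : Type*} [AddCommGroup M] (f : ℕ → M) {a b : ℕ}
    (hab : a ≤ b) : ∑ i ∈ Icc 1 b, f i - ∑ i ∈ Icc 1 a, f i = ∑ i ∈ Icc (a + 1) b, f i := by
  rw [show Icc 1 b = Ioc 0 b from Icc_add_one_left_eq_Ioc 0 b,
    show Icc 1 a = Ioc 0 a from Icc_add_one_left_eq_Ioc 0 a, Icc_add_one_left_eq_Ioc,
    ← sum_Ioc_consecutive f (Nat.zero_le a) hab, add_sub_cancel_left]

theorem Subalgebra.isUnit_of_mem_centralizer {R A : Type*} [CommSemiring R] [Ring A]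
    [Algebra R A] {T : Set A} {y : Subalgebra.centralizer R T} (hy : IsUnit (y : A)) :
    IsUnit y := by
  have hmem : Ring.inverse (y : A) ∈ Subalgebra.centralizer R T := by
    obtain ⟨u, hu⟩ := hy
    intro g hg
    rw [← hu, Ring.inverse_unit]
    exact (Commute.units_inv_right (hu ▸ y.2 g hg : Commute g u)).eq
  exact ⟨⟨y, ⟨_, hmem⟩, Subtype.ext (Ring.mul_inverse_cancel _ hy),
    Subtype.ext (Ring.inverse_mul_cancel _ hy)⟩, rfl⟩

abbrev Subalgebra.centralizerCentralizerNormedCommRing {A : Type*} [NormedRing A]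
    [NormedAlgebra ℂ A] {S : Set A} (hS : ∀ a ∈ S, ∀ b ∈ S, a * b = b * a) :
    NormedCommRing (Subalgebra.centralizer ℂ S.centralizer) :=
  { (inferInstance : NormedRing (Subalgebra.centralizer ℂ S.centralizer)) with
    mul_comm := fun a b => Subtype.ext (Set.centralizer_centralizer_comm_of_comm hS _ a.2 _ b.2) }

section NodeWeight

variable {R ι : Type*} [CommRing R] [DecidableEq ι] {x : ι → R} {s : Finset ι}

/-- Up to the sign `(-1) ^ (#s - 1)`, the barycentric weights `Lagrange.nodalWeight`. -/
noncomputable def nodeWeight (x : ι → R) (s : Finset ι) (p : ι) : R :=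
  ∏ j ∈ s.erase p, Ring.inverse (x j - x p)

theorem nodeWeight_mul_sub {p c : ι} (hc : c ∈ s) (hpc : p ≠ c) (hu : IsUnit (x c - x p)) :
    nodeWeight x s p * (x c - x p) = nodeWeight x (s.erase c) p := by
  rw [nodeWeight, ← mul_prod_erase _ _ (mem_erase.2 ⟨hpc.symm, hc⟩), erase_right_comm,
    mul_comm, ← mul_assoc, Ring.mul_inverse_cancel _ hu, one_mul, nodeWeight]

theorem sum_nodeWeight_mul_sub (hx : (s : Set ι).Pairwise fun i j => IsUnit (x i - x j))
    {c : ι} (hc : c ∈ s) :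
    ∑ p ∈ s, nodeWeight x s p * (x c - x p) = ∑ p ∈ s.erase c, nodeWeight x (s.erase c) p := by
  rw [← add_sum_erase _ _ hc, sub_self, mul_zero, zero_add]
  refine sum_congr rfl fun p hp => ?_
  have hpc := ne_of_mem_erase hp
  exact nodeWeight_mul_sub hc hpc (hx hc (mem_of_mem_erase hp) hpc.symm)

theorem sum_nodeWeight_eq_zero (hx : (s : Set ι).Pairwise fun i j => IsUnit (x i - x j))
    (hs : 2 ≤ #s) : ∑ p ∈ s, nodeWeight x s p = 0 := by
  induction s using Finset.strongInduction with
  | H s ih =>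
  obtain ⟨a, ha, b, hb, hab⟩ := one_lt_card.1 hs
  have herase : ∀ c ∈ s,
      ∑ p ∈ s.erase c, nodeWeight x (s.erase c) p = if #s = 2 then 1 else 0 := by
    intro c hc
    have hcard := card_erase_of_mem hc
    split_ifs with h2
    · obtain ⟨d, hd⟩ := card_eq_one.1 (by omega : #(s.erase c) = 1)
      simp [hd, nodeWeight]
    · exact ih _ (erase_ssubset hc) (hx.mono (coe_subset.2 (erase_subset c s))) (by omega)
  -- `x a - x b = (x a - x p) - (x b - x p)` turns the sum into a difference of two smaller ones.
  have key : (x a - x b) * ∑ p ∈ s, nodeWeight x s p = 0 := calc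
    _ = ∑ p ∈ s, nodeWeight x s p * (x a - x p) - ∑ p ∈ s, nodeWeight x s p * (x b - x p) := by
      rw [← sum_sub_distrib, mul_sum]
      exact sum_congr rfl fun p _ => by ring
    _ = 0 := by
      rw [sum_nodeWeight_mul_sub hx ha, sum_nodeWeight_mul_sub hx hb, herase a ha, herase b hb,
        sub_self]
  exact (hx ha hb hab).mul_right_eq_zero.1 key

theorem nodeWeight_range_succ (x : ℕ → R) (n q : ℕ) :
    nodeWeight x (range (n + 2)) (q + 1)
      = Ring.inverse (x 0 - x (q + 1)) * nodeWeight (fun j => x (j + 1)) (range (n + 1)) q := by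
  simp only [nodeWeight, ← filter_ne', prod_filter, prod_range_succ' _ (n + 1)]
  simp [mul_comm]

theorem nodeWeight_range_eq (x : ℕ → R) {k p : ℕ} (hp : p ≤ k) :
    nodeWeight x (range (k + 1)) p
      = (-1) ^ p * (∏ m ∈ range p, Ring.inverse (x p - x m))
        * ∏ n ∈ range (k - p), Ring.inverse (x (p + 1 + n) - x p) := by
  have hsplit : (range (k + 1)).erase p = range p ∪ Ico (p + 1) (k + 1) := by
    ext j
    simp only [mem_erase, mem_range, mem_union, mem_Ico]
    omega
  have hdisj : Disjoint (range p) (Ico (p + 1) (k + 1)) :=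
    disjoint_left.2 fun j hj hj' => by simp only [mem_range, mem_Ico] at hj hj'; omega
  rw [nodeWeight, hsplit, prod_union hdisj, prod_Ico_eq_prod_range, Nat.add_sub_add_right]
  simp_rw [← neg_sub (x p), Ring.inverse_neg, prod_neg, card_range]

end NodeWeight

section ExpNodeSum

variable {𝔸 : Type*} [NormedCommRing 𝔸] [NormedAlgebra ℝ 𝔸]

/-- `(-1) ^ n` times the divided difference of `u ↦ exp (-(t • (u - x 0)))` at `x 0, …, x n`. -/
noncomputable def expNodeSum (x : ℕ → 𝔸) (n : ℕ) (t : ℝ) : 𝔸 :=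
  ∑ p ∈ range (n + 1), exp (-(t • (x p - x 0))) * nodeWeight x (range (n + 1)) p

theorem expNodeSum_zero_right (x : ℕ → 𝔸) (n : ℕ)
    (hx : (↑(range (n + 2)) : Set ℕ).Pairwise fun i j => IsUnit (x i - x j)) :
    expNodeSum x (n + 1) 0 = 0 := by
  simpa [expNodeSum] using sum_nodeWeight_eq_zero hx (by simp)

variable [CompleteSpace 𝔸]

theorem exp_neg_add (a b : 𝔸) : exp (-(a + b)) = exp (-a) * exp (-b) := by
  let _ := NormedAlgebra.restrictScalars ℚ ℝ 𝔸
  rw [neg_add, exp_add]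

theorem map_exp_real {𝔹 : Type*} [NormedRing 𝔹] [NormedAlgebra ℝ 𝔹] (φ : 𝔸 →+* 𝔹)
    (hφ : Continuous φ) (a : 𝔸) : φ (exp a) = exp (φ a) := by
  let _ := NormedAlgebra.restrictScalars ℚ ℝ 𝔸
  let _ := NormedAlgebra.restrictScalars ℚ ℝ 𝔹
  exact map_exp φ hφ a

theorem continuous_exp_neg_smul (d : 𝔸) : Continuous fun t : ℝ => exp (-(t • d)) := by
  let _ := NormedAlgebra.restrictScalars ℚ ℝ 𝔸
  fun_prop

theorem hasDerivAt_exp_neg_smul (d : 𝔸) (t : ℝ) :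
    HasDerivAt (fun t : ℝ => exp (-(t • d))) (-d * exp (-(t • d))) t := by
  simpa only [smul_neg] using hasDerivAt_exp_smul_const' (-d) t

theorem continuous_expNodeSum (x : ℕ → 𝔸) (n : ℕ) : Continuous (expNodeSum x n) :=
  continuous_finsetSum _ fun _ _ => (continuous_exp_neg_smul _).mul continuous_const

theorem intervalIntegrable_exp_mul_expNodeSum (d : 𝔸) (x : ℕ → 𝔸) (n : ℕ) (a b : ℝ) :
    IntervalIntegrable (fun s => exp (-(s • d)) * expNodeSum x n s) volume a b :=
  ((continuous_exp_neg_smul d).mul (continuous_expNodeSum x n)).intervalIntegrable a b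

theorem hasDerivAt_expNodeSum (x : ℕ → 𝔸) (n : ℕ)
    (hx : (↑(range (n + 2)) : Set ℕ).Pairwise fun i j => IsUnit (x i - x j)) (t : ℝ) :
    HasDerivAt (expNodeSum x (n + 1))
      (exp (-(t • (x 1 - x 0))) * expNodeSum (fun j => x (j + 1)) n t) t := by
  have hterm : ∀ p ∈ range (n + 2), HasDerivAt
      (fun t : ℝ => exp (-(t • (x p - x 0))) * nodeWeight x (range (n + 2)) p)
      (-(x p - x 0) * exp (-(t • (x p - x 0))) * nodeWeight x (range (n + 2)) p) t :=
    fun p _ => (hasDerivAt_exp_neg_smul _ t).mul_const _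
  refine (HasDerivAt.fun_sum hterm).congr_deriv ?_
  rw [sum_range_succ', sub_self, neg_zero, zero_mul, zero_mul, add_zero, expNodeSum, mul_sum]
  refine sum_congr rfl fun q hq => ?_
  have hu : IsUnit (x 0 - x (q + 1)) := hx (by simp) (by simp at hq ⊢; omega) (by omega)
  rw [nodeWeight_range_succ, ← mul_assoc (exp _), ← exp_neg_add, ← smul_add, zero_add,
    sub_add_sub_cancel']
  calc _ = (x 0 - x (q + 1)) * Ring.inverse (x 0 - x (q + 1)) * exp (-(t • (x (q + 1) - x 0)))
        * nodeWeight (fun j => x (j + 1)) (range (n + 1)) q := by ring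
    _ = _ := by rw [Ring.mul_inverse_cancel _ hu, one_mul]

theorem integral_exp_mul_expNodeSum (x : ℕ → 𝔸) (n : ℕ)
    (hx : (↑(range (n + 2)) : Set ℕ).Pairwise fun i j => IsUnit (x i - x j)) (t : ℝ) :
    ∫ s in (0 : ℝ)..t, exp (-(s • (x 1 - x 0))) * expNodeSum (fun j => x (j + 1)) n s
      = expNodeSum x (n + 1) t := by
  rw [intervalIntegral.integral_eq_sub_of_hasDerivAt (fun s _ => hasDerivAt_expNodeSum x n hx s)
    (intervalIntegrable_exp_mul_expNodeSum _ _ n 0 t), expNodeSum_zero_right x n hx, sub_zero]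

theorem iterE_eq_expNodeSum {V : Type*} [NormedAddCommGroup V] [NormedSpace ℂ V]
    [CompleteSpace V] (φ : 𝔸 →+* (V →L[ℂ] V)) (hφ : Continuous φ) (k : ℕ) (x : ℕ → 𝔸)
    (hx : (↑(range (k + 1)) : Set ℕ).Pairwise fun i j => IsUnit (x i - x j)) (a : 𝔸) (t : ℝ) :
    iterE ((List.range k).map fun j => φ (x (j + 1) - x j)) (φ a) t
      = φ (exp (-a) * expNodeSum x k t) := by
  induction k generalizing x a t with
  | zero => simp [iterE, expNodeSum, nodeWeight, map_exp_real φ hφ]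
  | succ k ih =>
    have hx' : (↑(range (k + 1)) : Set ℕ).Pairwise fun i j => IsUnit (x (i + 1) - x (j + 1)) :=
      fun i hi j hj hij => hx (by simpa using hi) (by simpa using hj) (by simpa using hij)
    let L : 𝔸 →L[ℝ] (V →L[ℂ] V) :=
      ((φ : 𝔸 →+ (V →L[ℂ] V)).toRealLinearMap hφ).comp (ContinuousLinearMap.mul ℝ 𝔸 (exp (-a)))
    have hstep : ∀ s : ℝ, iterE ((List.range k).map fun j => φ (x (j + 2) - x (j + 1)))
        (φ a + s • φ (x 1 - x 0)) s
        = L (exp (-(s • (x 1 - x 0))) * expNodeSum (fun j => x (j + 1)) k s) := by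
      intro s
      rw [← map_real_smul φ hφ, ← map_add, ih _ hx', exp_neg_add, mul_assoc]
      rfl
    rw [List.range_succ_eq_map, List.map_cons, List.map_map, iterE]
    refine (intervalIntegral.integral_congr fun s _ => hstep s).trans ?_
    rw [L.intervalIntegral_comp_comm (intervalIntegrable_exp_mul_expNodeSum _ _ k 0 t),
      integral_exp_mul_expNodeSum x k hx]
    rfl

theorem map_expNodeSum_eq {E : Type*} [NormedRing E] [NormedAlgebra ℝ E] (φ : 𝔸 →+* E)
    (hφ : Continuous φ) (Γ : ℕ → E) (k : ℕ) (x : ℕ → 𝔸)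
    (hxΓ : ∀ a b, a ≤ b → b ≤ k → φ (x b - x a) = ∑ i ∈ Icc (a + 1) b, Γ i)
    (hx : (↑(range (k + 1)) : Set ℕ).Pairwise fun i j => IsUnit (x i - x j)) (t : ℝ) :
    φ (expNodeSum x k t) =
      ((List.range k).map fun n => Ring.inverse (∑ i ∈ Icc 1 (n + 1), Γ i)).prod +
      ∑ p ∈ Icc 1 k, (-1 : E) ^ p * exp (-(t • ∑ i ∈ Icc 1 p, Γ i)) *
        ((List.range p).map fun m => Ring.inverse (∑ i ∈ Icc (m + 1) p, Γ i)).prod *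
        ((List.range (k - p)).map fun n =>
          Ring.inverse (∑ j ∈ Icc (p + 1) (p + 1 + n), Γ j)).prod := by
  have hinv : ∀ a b, a < b → b ≤ k →
      φ (Ring.inverse (x b - x a)) = Ring.inverse (∑ i ∈ Icc (a + 1) b, Γ i) :=
    fun a b hab hb => by
      rw [map_ringInverse φ (hx (by simp; omega) (by simp; omega) hab.ne'), hxΓ a b hab.le hb]
  rw [expNodeSum, sum_range_eq_add_Ico _ (by omega : 0 < k + 1), Ico_add_one_right_eq_Icc,
    map_add, map_sum]
  congr 1
  · rw [sub_self, smul_zero, neg_zero, exp_zero, one_mul, nodeWeight_range_eq x (Nat.zero_le k),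
      pow_zero, prod_range_zero, one_mul, one_mul, Nat.sub_zero, prod_range_eq_list_prod,
      map_list_prod, List.map_map]
    refine congrArg List.prod (List.map_congr_left fun n hn => ?_)
    rw [Function.comp_apply, zero_add, add_comm 1 n]
    exact hinv 0 (n + 1) n.succ_pos (by simp at hn; omega)
  · refine sum_congr rfl fun p hp => ?_
    rw [mem_Icc] at hp
    rw [map_mul, map_exp_real φ hφ, map_neg, map_real_smul φ hφ, hxΓ 0 p (Nat.zero_le p) hp.2,
      nodeWeight_range_eq x hp.2, map_mul, map_mul, map_pow, map_neg, map_one,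
      prod_range_eq_list_prod, prod_range_eq_list_prod, map_list_prod, map_list_prod,
      List.map_map, List.map_map]
    have hL1 : ((List.range p).map (φ ∘ fun m => Ring.inverse (x p - x m))).prod
        = ((List.range p).map fun m => Ring.inverse (∑ i ∈ Icc (m + 1) p, Γ i)).prod :=
      congrArg List.prod (List.map_congr_left fun m hm => hinv m p (by simpa using hm) hp.2)
    have hL2 : ((List.range (k - p)).map (φ ∘ fun n => Ring.inverse (x (p + 1 + n) - x p))).prod
        = ((List.range (k - p)).map fun n =>
            Ring.inverse (∑ j ∈ Icc (p + 1) (p + 1 + n), Γ j)).prod :=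
      congrArg List.prod (List.map_congr_left fun n hn => hinv p (p + 1 + n) (by omega)
        (by simp at hn; omega))
    rw [hL1, hL2, zero_add, ← mul_assoc, ← mul_assoc, ((Commute.neg_one_left _).pow_left p).eq]

theorem iterE_eq_of_partialSums {V : Type*} [NormedAddCommGroup V] [NormedSpace ℂ V]
    [CompleteSpace V] (φ : 𝔸 →+* (V →L[ℂ] V)) (hφ : Continuous φ) (Γ : ℕ → (V →L[ℂ] V))
    (k : ℕ) (x : ℕ → 𝔸)
    (hxΓ : ∀ a b, a ≤ b → b ≤ k → φ (x b - x a) = ∑ i ∈ Icc (a + 1) b, Γ i)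
    (hunit : ∀ a b, a < b → b ≤ k → IsUnit (x b - x a)) (t : ℝ) :
    iterE ((List.range k).map fun j => Γ (j + 1)) 0 t =
      ((List.range k).map fun n => Ring.inverse (∑ i ∈ Icc 1 (n + 1), Γ i)).prod +
      ∑ p ∈ Icc 1 k, (-1 : V →L[ℂ] V) ^ p * exp (-(t • ∑ i ∈ Icc 1 p, Γ i)) *
        ((List.range p).map fun m => Ring.inverse (∑ i ∈ Icc (m + 1) p, Γ i)).prod *
        ((List.range (k - p)).map fun n =>
          Ring.inverse (∑ j ∈ Icc (p + 1) (p + 1 + n), Γ j)).prod := by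
  have hx : (↑(range (k + 1)) : Set ℕ).Pairwise fun i j => IsUnit (x i - x j) := by
    intro i hi j hj hij
    simp only [coe_range, Set.mem_Iio] at hi hj
    rcases lt_or_gt_of_ne hij with h | h
    · rw [← neg_sub]
      exact (hunit i j h (by omega)).neg
    · exact hunit j i h (by omega)
  have hlist : (List.range k).map (fun j => Γ (j + 1))
      = (List.range k).map fun j => φ (x (j + 1) - x j) :=
    List.map_congr_left fun j hj => by
      rw [hxΓ j (j + 1) j.le_succ (by simp at hj; omega), Icc_self, sum_singleton]
  rw [hlist, ← map_zero φ, iterE_eq_expNodeSum φ hφ k x hx 0 t, neg_zero, exp_zero, one_mul,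
    map_expNodeSum_eq φ hφ Γ k x hxΓ hx t]

end ExpNodeSum

theorem stmt2_general (V : Type*) [NormedAddCommGroup V] [NormedSpace ℂ V]
    [FiniteDimensional ℂ V]
    (k : ℕ) (Γ : ℕ → (V →L[ℂ] V))
    (hcomm : ∀ i j, 1 ≤ i → i ≤ k → 1 ≤ j → j ≤ k → Commute (Γ i) (Γ j))
    (hinv : ∀ a b, 1 ≤ a → a ≤ b → b ≤ k → IsUnit (∑ i ∈ Finset.Icc a b, Γ i))
    (t : ℝ) :
    iterE ((List.range k).map fun j => Γ (j + 1)) 0 t =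
      ((List.range k).map fun n =>
          Ring.inverse (∑ i ∈ Finset.Icc 1 (n + 1), Γ i)).prod +
      ∑ p ∈ Finset.Icc 1 k, (-1 : V →L[ℂ] V) ^ p *
        NormedSpace.exp (-(t • ∑ i ∈ Finset.Icc 1 p, Γ i)) *
        ((List.range p).map fun m =>
            Ring.inverse (∑ i ∈ Finset.Icc (m + 1) p, Γ i)).prod *
        ((List.range (k - p)).map fun n =>
            Ring.inverse (∑ j ∈ Finset.Icc (p + 1) (p + 1 + n), Γ j)).prod := by
  have hS : ∀ a ∈ Γ '' Set.Icc 1 k, ∀ b ∈ Γ '' Set.Icc 1 k, a * b = b * a := by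
    rintro _ ⟨i, hi, rfl⟩ _ ⟨j, hj, rfl⟩
    exact hcomm i j hi.1 hi.2 hj.1 hj.2
  let B := Subalgebra.centralizer ℂ (Γ '' Set.Icc 1 k).centralizer
  let _ : NormedCommRing B := Subalgebra.centralizerCentralizerNormedCommRing hS
  have : CompleteSpace B := (Set.isClosed_centralizer _).completeSpace_coe
  let φ : B →+* (V →L[ℂ] V) := B.val
  have hσ : ∀ p, ∑ i ∈ Icc 1 (min p k), Γ i ∈ B := fun p =>
    Subalgebra.sum_mem _ fun i hi => Set.subset_centralizer_centralizer
      ⟨i, by simp only [mem_Icc] at hi; exact ⟨hi.1, hi.2.trans (min_le_right p k)⟩, rfl⟩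
  -- the nodes `x p = S_{1,p}`; only `p ≤ k` matters, and `min` keeps the others inside `B`
  let x : ℕ → B := fun p => ⟨∑ i ∈ Icc 1 (min p k), Γ i, hσ p⟩
  have hxΓ : ∀ a b, a ≤ b → b ≤ k → φ (x b - x a) = ∑ i ∈ Icc (a + 1) b, Γ i := by
    intro a b hab hb
    show ∑ i ∈ Icc 1 (min b k), Γ i - ∑ i ∈ Icc 1 (min a k), Γ i = _
    rw [min_eq_left hb, min_eq_left (hab.trans hb), sum_Icc_one_sub_sum_Icc_one Γ hab]
  refine iterE_eq_of_partialSums φ continuous_subtype_val Γ k x hxΓ (fun a b hab hb => ?_) t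
  refine Subalgebra.isUnit_of_mem_centralizer ?_
  show IsUnit (φ (x b - x a))
  rw [hxΓ a b hab.le hb]
  exact hinv (a + 1) b (by omega) hab hb

/-- explicit value of the iterated time-ordered Bochner integral of
`exp(-Σ_{j=1}^k t_j Γ_j)` for pairwise commuting `Γ_1,…,Γ_k` whose consecutive sums
`S_{a,b} = Σ_{i=a}^b Γ_i` are all invertible (empty products are `1`,
products are taken in the indicated order). -/
theorem stmt2 (V : Type*) [NormedAddCommGroup V] [NormedSpace ℂ V]
    [FiniteDimensional ℂ V] [Nontrivial V]
    (k : ℕ) (hk : 1 ≤ k) (Γ : ℕ → (V →L[ℂ] V))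
    (hcomm : ∀ i j, 1 ≤ i → i ≤ k → 1 ≤ j → j ≤ k → Commute (Γ i) (Γ j))
    (hinv : ∀ a b, 1 ≤ a → a ≤ b → b ≤ k → IsUnit (∑ i ∈ Finset.Icc a b, Γ i))
    (t : ℝ) :
    iterE ((List.range k).map fun j => Γ (j + 1)) 0 t =
      ((List.range k).map fun n =>
          Ring.inverse (∑ i ∈ Finset.Icc 1 (n + 1), Γ i)).prod +
      ∑ p ∈ Finset.Icc 1 k, (-1 : V →L[ℂ] V) ^ p *
        NormedSpace.exp (-(t • ∑ i ∈ Finset.Icc 1 p, Γ i)) *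
        ((List.range p).map fun m =>
            Ring.inverse (∑ i ∈ Finset.Icc (m + 1) p, Γ i)).prod *
        ((List.range (k - p)).map fun n =>
            Ring.inverse (∑ j ∈ Finset.Icc (p + 1) (p + 1 + n), Γ j)).prod :=
  stmt2_general V k Γ hcomm hinv t
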